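/- arXiv:2504.18747 — 3 statements merged into one kernel-verified Lean document; each statement's English description precedes it below -/
import Mathlib

section
/- Let S and T be positive semi-definite operators on a finite-dimensional Hilbert space with 0 ≤ S ≤ I and T ≥ 0. Then I − (S+T)^{−1/2} S (S+T)^{−1/2} ≤ 2(I − S) + 4T (Hayashi–Nagaoka operator inequality), where the inverse square root is taken on the support of S+T. -/
/-!
Hayashi–Nagaoka operator inequality:
for 0 ≤ S ≤ I and T ≥ 0 (positive semi-definite operators on a finite-dimensional
Hilbert space, modeled as matrices over ℂ),
  I − (S+T)^{−1/2} S (S+T)^{−1/2} ≤ 2(I − S) + 4T,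
where (S+T)^{−1/2} is the square root of the Moore–Penrose pseudoinverse of S+T,
realized by functional calculus with t ↦ t^{-1/2} on the support (t ≠ 0) of S+T.
The Loewner order A ≤ B is expressed as (B - A).PosSemidef.
-/

open Matrix
open scoped ComplexOrder

set_option linter.unusedSectionVars false

/-- Square root of the Moore–Penrose pseudoinverse of a Hermitian matrix, via
functional calculus: `t ↦ t^{-1/2}` on nonzero eigenvalues, `0` on the kernel. -/
noncomputable def pinvSqrt {n : Type*} [Fintype n] [DecidableEq n] {A : Matrix n n ℂ}
    (hA : A.IsHermitian) : Matrix n n ℂ :=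
  hA.cfc (fun t => if t = 0 then 0 else t ^ (-(1 / 2 : ℝ)))

/-!
With `A = S + T` and `P = A^{-1/2}`, write `1 - PSP = 1 - PAP + PTP`. Splitting `P = (P - 1) + 1`
and using `T ≤ A` gives `PTP ≤ 2(P - 1)A(P - 1) + 2T`. The remaining function of `A`,
`1 - PAP + 2(P - 1)A(P - 1)`, is `2(1 - √A)²` on the support of `A` and `1` on its kernel, so it is
at most `2(1 - 2√A + A)`. Finally `S ≤ √S ≤ √A`, since `S ≤ 1` and the square root is operator
monotone, so that `2(1 - 2√A + A) + 2T ≤ 2(1 - 2S + S + T) + 2T = 2(1 - S) + 4T`.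
-/

open scoped MatrixOrder Matrix.Norms.L2Operator

theorem star_add_mul_add_le_two_nsmul {R : Type*} [Ring R] [PartialOrder R] [StarRing R]
    [StarOrderedRing R] {t : R} (ht : 0 ≤ t) (x y : R) :
    star (x + y) * t * (x + y) ≤ 2 • (star x * t * x + star y * t * y) := by
  rw [← sub_nonneg]
  convert star_left_conjugate_nonneg ht (x - y) using 1
  simp only [star_add, star_sub, two_nsmul]
  noncomm_ring

theorem CFC.le_sqrt_of_le_one {A : Type*} [CStarAlgebra A] [PartialOrder A] [StarOrderedRing A]
    {a : A} (ha₀ : 0 ≤ a) (ha₁ : a ≤ 1) : a ≤ sqrt a := by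
  rw [sqrt_eq_real_sqrt a, cfcₙ_eq_cfc]
  conv_lhs => rw [← cfc_id' ℝ a]
  refine cfc_mono (a := a) (f := fun x : ℝ => x) (g := Real.sqrt) fun x hx => ?_
  have hx₀ : 0 ≤ x := spectrum_nonneg_of_nonneg ha₀ hx
  have hx₁ : x ≤ 1 := (le_algebraMap_iff_spectrum_le (r := (1 : ℝ))).mp (by simpa using ha₁) x hx
  exact Real.le_sqrt_of_sq_le (by nlinarith)

noncomputable def Real.pinvSqrt (t : ℝ) : ℝ := if t = 0 then 0 else t ^ (-(1 / 2 : ℝ))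

theorem Real.one_sub_pinvSqrt_mul_mul_pinvSqrt_add_le {t : ℝ} (ht : 0 ≤ t) :
    1 - pinvSqrt t * t * pinvSqrt t + 2 * ((pinvSqrt t - 1) * t * (pinvSqrt t - 1))
      ≤ 2 * (1 - 2 * √t + t) := by
  rcases ht.eq_or_lt with rfl | ht
  · simp [pinvSqrt]
  · have hp : pinvSqrt t = (√t)⁻¹ := by
      simp only [pinvSqrt, if_neg ht.ne', Real.sqrt_eq_rpow, Real.rpow_neg ht.le]
    rw [hp]
    field_simp
    nlinarith [Real.sq_sqrt ht.le]

section Matrix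

variable {n : Type*} [Fintype n] [DecidableEq n] {A : Matrix n n ℂ}

theorem pinvSqrt_eq_cfc (hA : A.IsHermitian) : pinvSqrt hA = cfc Real.pinvSqrt A :=
  (hA.cfc_eq _).symm

theorem isHermitian_pinvSqrt (hA : A.IsHermitian) : (pinvSqrt hA).IsHermitian :=
  pinvSqrt_eq_cfc hA ▸ cfc_predicate _ A

theorem one_sub_pinvSqrt_mul_mul_pinvSqrt_add_le (hA : A.PosSemidef) :
    1 - pinvSqrt hA.1 * A * pinvSqrt hA.1
        + (2 : ℝ) • ((pinvSqrt hA.1 - 1) * A * (pinvSqrt hA.1 - 1))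
      ≤ (2 : ℝ) • (1 - (2 : ℝ) • CFC.sqrt A + A) := by
  have hc (f : ℝ → ℝ) : ContinuousOn f (spectrum ℝ A) := A.finite_real_spectrum.continuousOn f
  rw [pinvSqrt_eq_cfc, CFC.sqrt_eq_real_sqrt A hA.nonneg, cfcₙ_eq_cfc]
  calc _ = cfc (fun t => 1 - Real.pinvSqrt t * t * Real.pinvSqrt t
          + 2 * ((Real.pinvSqrt t - 1) * t * (Real.pinvSqrt t - 1))) A := by
        rw [cfc_add (hf := hc _) (hg := hc _), cfc_sub (hf := hc _) (hg := hc _),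
          cfc_const_one ℝ A, cfc_const_mul _ _ _ (hc _), cfc_mul (hf := hc _) (hg := hc _),
          cfc_mul (hf := hc _) (hg := hc _), cfc_mul (hf := hc _) (hg := hc _),
          cfc_mul (hf := hc _) (hg := hc _), cfc_sub (hf := hc _) (hg := hc _),
          cfc_const_one ℝ A, cfc_id' ℝ A]
    _ ≤ cfc (fun t => 2 * (1 - 2 * √t + t)) A :=
        cfc_mono (fun t ht => Real.one_sub_pinvSqrt_mul_mul_pinvSqrt_add_le
          (spectrum_nonneg_of_nonneg hA.nonneg ht)) (hc _) (hc _)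
    _ = _ := by
        rw [cfc_const_mul _ _ _ (hc _), cfc_add (hf := hc _) (hg := hc _),
          cfc_sub (hf := hc _) (hg := hc _), cfc_const_mul _ _ _ (hc _), cfc_const_one ℝ A,
          cfc_id' ℝ A]

end Matrix

theorem hayashi_nagaoka {n : Type*} [Fintype n] [DecidableEq n]
    (S T : Matrix n n ℂ) (hS : S.PosSemidef) (hSle : ((1 : Matrix n n ℂ) - S).PosSemidef)
    (hT : T.PosSemidef) :
    ((2 : ℂ) • ((1 : Matrix n n ℂ) - S) + (4 : ℂ) • T -
      ((1 : Matrix n n ℂ) -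
        pinvSqrt (hS.add hT).1 * S * pinvSqrt (hS.add hT).1)).PosSemidef := by
  set P := pinvSqrt (hS.add hT).1
  have hP : star P = P := (isHermitian_pinvSqrt _).eq
  have hP₁ : star (P - 1) = P - 1 := by rw [star_sub, hP, star_one]
  have hS_le_sqrt : S ≤ CFC.sqrt (S + T) :=
    (CFC.le_sqrt_of_le_one hS.nonneg (Matrix.le_iff.mpr hSle)).trans
      (CFC.sqrt_le_sqrt _ _ (le_add_of_nonneg_right hT.nonneg))
  have hPTP : P * T * P ≤ 2 • ((P - 1) * (S + T) * (P - 1) + T) :=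
    calc P * T * P = star (P - 1 + 1) * T * (P - 1 + 1) := by rw [sub_add_cancel, hP]
      _ ≤ 2 • (star (P - 1) * T * (P - 1) + star 1 * T * 1) :=
        star_add_mul_add_le_two_nsmul hT.nonneg _ _
      _ ≤ 2 • (star (P - 1) * (S + T) * (P - 1) + T) := by
        rw [star_one, mul_one, one_mul]
        gcongr
        exact star_left_conjugate_le_conjugate (le_add_of_nonneg_left hS.nonneg) _
      _ = 2 • ((P - 1) * (S + T) * (P - 1) + T) := by rw [hP₁]
  rw [← Matrix.le_iff]
  calc 1 - P * S * P = 1 - P * (S + T) * P + P * T * P := by noncomm_ring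
    _ ≤ 1 - P * (S + T) * P + 2 • ((P - 1) * (S + T) * (P - 1) + T) := by gcongr
    _ = 1 - P * (S + T) * P + (2 : ℝ) • ((P - 1) * (S + T) * (P - 1)) + (2 : ℝ) • T := by
        module
    _ ≤ (2 : ℝ) • (1 - (2 : ℝ) • CFC.sqrt (S + T) + (S + T)) + (2 : ℝ) • T := by
        gcongr
        exact one_sub_pinvSqrt_mul_mul_pinvSqrt_add_le (hS.add hT)
    _ ≤ (2 : ℝ) • (1 - (2 : ℝ) • S + (S + T)) + (2 : ℝ) • T := by gcongr
    _ = (2 : ℂ) • (1 - S) + (4 : ℂ) • T := by module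
end

section
/- Let σ be a quantum state (positive semi-definite operator of trace one) on a finite-dimensional Hilbert space with spectral projections P_1,…,P_v onto its distinct eigenspaces, and let E_σ(ρ) = Σ_i P_i ρ P_i denote the pinching map. Then for any quantum state ρ, ρ ≤ v · E_σ(ρ), where v is the number of distinct eigenvalues of σ. -/
/-!
For any matrices `A₁, …, A_v` and any `ρ ≥ 0`,
`v • ∑ i, Aᵢ ρ Aᵢᴴ - (∑ i, Aᵢ) ρ (∑ i, Aᵢ)ᴴ = ½ ∑ i j, (Aᵢ - Aⱼ) ρ (Aᵢ - Aⱼ)ᴴ`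
is a sum of positive semidefinite matrices. Taking `Aᵢ = Pᵢ`, with `∑ i, Pᵢ = 1`, gives
`ρ ≤ v • E_σ(ρ)`.
-/

open Matrix
open scoped ComplexOrder

namespace Matrix

variable {ι m n 𝕜 : Type*} [Fintype ι] [Fintype n] [RCLike 𝕜]

theorem sum_sum_sub_mul_mul_conjTranspose_sub (A : ι → Matrix m n 𝕜) (ρ : Matrix n n 𝕜) :
    ∑ i, ∑ j, (A i - A j) * ρ * (A i - A j)ᴴ =
      (2 : 𝕜) • ((Fintype.card ι : 𝕜) • ∑ i, A i * ρ * (A i)ᴴ - (∑ i, A i) * ρ * (∑ i, A i)ᴴ) := by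
  simp only [conjTranspose_sub, conjTranspose_sum, Matrix.sub_mul, Matrix.mul_sub, Matrix.sum_mul,
    Matrix.mul_sum, Finset.sum_sub_distrib, Finset.sum_const, Finset.card_univ, ← Finset.smul_sum,
    Nat.cast_smul_eq_nsmul]
  rw [Finset.sum_comm (f := fun i j => A j * ρ * (A i)ᴴ)]
  module

theorem PosSemidef.card_smul_sum_sub_sum_mul_mul_conjTranspose_sum [Fintype m] {ρ : Matrix n n 𝕜}
    (hρ : ρ.PosSemidef) (A : ι → Matrix m n 𝕜) :
    ((Fintype.card ι : 𝕜) • ∑ i, A i * ρ * (A i)ᴴ - (∑ i, A i) * ρ * (∑ i, A i)ᴴ).PosSemidef := by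
  have hsum : (∑ i, ∑ j, (A i - A j) * ρ * (A i - A j)ᴴ).PosSemidef :=
    posSemidef_sum _ fun i _ => posSemidef_sum _ fun j _ => hρ.mul_mul_conjTranspose_same _
  rw [sum_sum_sub_mul_mul_conjTranspose_sub] at hsum
  simpa [smul_smul] using hsum.smul (a := (2 : 𝕜)⁻¹) (by positivity)

end Matrix

theorem pinching_inequality_general {n : Type*} [Fintype n] [DecidableEq n]
    {v : ℕ} (P : Fin v → Matrix n n ℂ)
    (hPherm : ∀ i, (P i).IsHermitian)
    (hPsum : ∑ i, P i = (1 : Matrix n n ℂ))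
    (ρ : Matrix n n ℂ) (hρ : ρ.PosSemidef) :
    ((v : ℂ) • (∑ i, P i * ρ * P i) - ρ).PosSemidef := by
  have hPself : ∀ i, (P i)ᴴ = P i := fun i => (hPherm i).eq
  simpa [hPself, hPsum] using hρ.card_smul_sum_sub_sum_mul_mul_conjTranspose_sum P

theorem pinching_inequality {n : Type*} [Fintype n] [DecidableEq n]
    {v : ℕ} (P : Fin v → Matrix n n ℂ) (l : Fin v → ℝ)
    (hPherm : ∀ i, (P i).IsHermitian)
    (hPproj : ∀ i, P i * P i = P i)
    (hPorth : ∀ i j, i ≠ j → P i * P j = 0)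
    (hPsum : ∑ i, P i = (1 : Matrix n n ℂ))
    (hl_distinct : Function.Injective l)
    (hl_nonneg : ∀ i, 0 ≤ l i)
    (hσ_trace : (∑ i, (l i : ℂ) • P i).trace = 1)
    (ρ : Matrix n n ℂ) (hρ : ρ.PosSemidef) (hρ_trace : ρ.trace = 1) :
    ((v : ℂ) • (∑ i, P i * ρ * P i) - ρ).PosSemidef :=
  pinching_inequality_general P hPherm hPsum ρ hρ
end

section
/- Let ρ be a quantum state and Π a projection on a finite-dimensional Hilbert space such that Tr[Π ρ] ≥ 1 − ε for some 0 ≤ ε ≤ 1. Then ‖Π ρ Π − ρ‖_1 ≤ 2√ε, where ‖·‖_1 denotes the trace norm (gentle measurement lemma). -/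
/-!
For Hermitian `A`, `‖A‖₁ = Re Tr (W A)` with `W = sign A`, a contraction (`Wᴴ W ≤ 1`).
With `Q = 1 - Π` one has `Π ρ Π - ρ = -(Π ρ Q + Q ρ)`, and each term of
`Tr (W (Π ρ Π - ρ))` is bounded by Cauchy–Schwarz for the semi-inner product
`⟪X, Y⟫ = Tr (Y ρ Xᴴ)`, in which `‖Q‖² = Tr (Q ρ Q) = 1 - Tr (Π ρ) ≤ ε` while `‖Π‖², ‖1‖² ≤ 1`.
-/

open Matrix
open scoped ComplexOrder

/-- Trace norm `‖A‖₁ = Tr √(AᴴA)` of a complex matrix, via functional calculus. -/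
noncomputable def traceNorm {n : Type*} [Fintype n] [DecidableEq n]
    (A : Matrix n n ℂ) : ℝ :=
  ((Matrix.posSemidef_conjTranspose_mul_self A).1.cfc Real.sqrt).trace.re

open scoped MatrixOrder

namespace Matrix
variable {n : Type*} [Fintype n]

lemma PosSemidef.norm_trace_mul_mul_conjTranspose_le {M : Matrix n n ℂ} (hM : M.PosSemidef)
    (X Y : Matrix n n ℂ) :
    ‖(Y * M * Xᴴ).trace‖ ≤
      √(X * M * Xᴴ).trace.re * √(Y * M * Yᴴ).trace.re := by
  let := M.toMatrixSeminormedAddCommGroup hM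
  let := M.toMatrixInnerProductSpace hM
  exact norm_inner_le_norm (𝕜 := ℂ) X Y

lemma _root_.IsStarProjection.trace_mul_mul_conjTranspose {P : Matrix n n ℂ}
    (hP : IsStarProjection P) (ρ : Matrix n n ℂ) : (P * ρ * Pᴴ).trace = (P * ρ).trace := by
  rw [← star_eq_conjTranspose, hP.isSelfAdjoint.star_eq, trace_mul_comm, ← mul_assoc,
    hP.isIdempotentElem.eq]

section
variable [DecidableEq n]

lemma traceNorm_eq_re_trace_abs (A : Matrix n n ℂ) : traceNorm A = (CFC.abs A).trace.re := by
  rw [traceNorm, ← IsHermitian.cfc_eq, CFC.abs, CFC.sqrt_eq_real_sqrt _ (star_mul_self_nonneg A),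
    cfcₙ_eq_cfc, star_eq_conjTranspose]

lemma IsHermitian.abs_eq_cfc_sign_mul {A : Matrix n n ℂ} (hA : A.IsHermitian) :
    CFC.abs A = cfc (fun x : ℝ => (SignType.sign x : ℝ)) A * A := by
  conv_rhs => arg 2; rw [← cfc_id' ℝ A hA.isSelfAdjoint]
  rw [← cfc_mul _ _ _ (finite_real_spectrum.continuousOn _) (finite_real_spectrum.continuousOn _),
    CFC.abs_eq_cfc_norm A hA.isSelfAdjoint]
  simp only [Real.norm_eq_abs, sign_mul_self]

lemma conjTranspose_cfc_sign_mul_le_one (A : Matrix n n ℂ) :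
    (cfc (fun x : ℝ => (SignType.sign x : ℝ)) A)ᴴ *
      cfc (fun x : ℝ => (SignType.sign x : ℝ)) A ≤ 1 := by
  rw [← star_eq_conjTranspose, ← cfc_star,
    ← cfc_mul _ _ _ (finite_real_spectrum.continuousOn _) (finite_real_spectrum.continuousOn _)]
  refine cfc_le_one _ _ fun x _ => ?_
  rcases lt_trichotomy x 0 with hx | rfl | hx <;> simp [*]

lemma re_trace_mul_mul_conjTranspose_le {W C : Matrix n n ℂ} (hW : Wᴴ * W ≤ 1)
    (hC : C.PosSemidef) : (W * C * Wᴴ).trace.re ≤ C.trace.re := by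
  obtain ⟨R, hR, rfl⟩ : ∃ R : Matrix n n ℂ, Rᴴ = R ∧ C = R * R :=
    ⟨CFC.sqrt C, (CFC.sqrt_nonneg C).isSelfAdjoint.star_eq,
      (CFC.sqrt_mul_sqrt_self C hC.nonneg).symm⟩
  have hconj := le_iff.mp (star_left_conjugate_le_conjugate hW R)
  rw [star_eq_conjTranspose, hR, mul_one] at hconj
  have := (Complex.le_def.mp hconj.trace_nonneg).1
  rw [trace_sub, Complex.sub_re, Complex.zero_re, sub_nonneg] at this
  calc (W * (R * R) * Wᴴ).trace.re = (Wᴴ * W * R * R).trace.re := by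
        rw [trace_mul_comm]; simp only [mul_assoc]
    _ = (R * (Wᴴ * W) * R).trace.re := by rw [trace_mul_comm]; simp only [mul_assoc]
    _ ≤ (R * R).trace.re := this

lemma PosSemidef.norm_trace_mul_mul_mul_conjTranspose_le {M W : Matrix n n ℂ}
    (hM : M.PosSemidef) (hW : Wᴴ * W ≤ 1) (X Y : Matrix n n ℂ) :
    ‖(W * Y * M * Xᴴ).trace‖ ≤
      √(X * M * Xᴴ).trace.re * √(Y * M * Yᴴ).trace.re := by
  refine (hM.norm_trace_mul_mul_conjTranspose_le X (W * Y)).trans ?_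
  have hWY : W * Y * M * (W * Y)ᴴ = W * (Y * M * Yᴴ) * Wᴴ := by
    simp only [conjTranspose_mul, mul_assoc]
  rw [hWY]
  exact mul_le_mul_of_nonneg_left
    (Real.sqrt_le_sqrt (re_trace_mul_mul_conjTranspose_le hW (hM.mul_mul_conjTranspose_same Y)))
    (Real.sqrt_nonneg _)

lemma IsHermitian.exists_traceNorm_eq_re_trace_mul {A : Matrix n n ℂ} (hA : A.IsHermitian) :
    ∃ W : Matrix n n ℂ, Wᴴ * W ≤ 1 ∧ traceNorm A = (W * A).trace.re :=
  ⟨_, conjTranspose_cfc_sign_mul_le_one A, by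
    rw [traceNorm_eq_re_trace_abs, hA.abs_eq_cfc_sign_mul]⟩

end

end Matrix

theorem gentle_measurement_general {n : Type*} [Fintype n] [DecidableEq n]
    (ρ Pr : Matrix n n ℂ) (hρ : ρ.PosSemidef) (hρtr : ρ.trace = 1)
    (hPherm : Pr.IsHermitian) (hPidem : Pr * Pr = Pr)
    (ε : ℝ)
    (h : 1 - ε ≤ ((Pr * ρ).trace).re) :
    traceNorm (Pr * ρ * Pr - ρ) ≤ 2 * Real.sqrt ε := by
  have hP : IsStarProjection Pr := ⟨hPidem, hPherm⟩
  have hA : (Pr * ρ * Pr - ρ).IsHermitian := by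
    simpa [hPherm.eq, mul_assoc] using (hρ.mul_mul_conjTranspose_same Pr).1.sub hρ.1
  obtain ⟨W, hW, hnorm⟩ := hA.exists_traceNorm_eq_re_trace_mul
  have hsplit :
      W * (Pr * ρ * Pr - ρ) = -(W * Pr * ρ * (1 - Pr)ᴴ + W * (1 - Pr) * ρ * 1ᴴ) := by
    rw [conjTranspose_sub, conjTranspose_one, hPherm.eq]
    noncomm_ring
  have hQρQ : ((1 - Pr) * ρ * (1 - Pr)ᴴ).trace.re = 1 - (Pr * ρ).trace.re := by
    rw [hP.one_sub.trace_mul_mul_conjTranspose, sub_mul, one_mul, trace_sub, hρtr,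
      Complex.sub_re, Complex.one_re]
  have hQρQ_nonneg : 0 ≤ ((1 - Pr) * ρ * (1 - Pr)ᴴ).trace.re :=
    (Complex.le_def.mp (hρ.mul_mul_conjTranspose_same _).trace_nonneg).1
  have hρ1 : (1 * ρ * 1ᴴ).trace.re = 1 := by simp [hρtr]
  calc traceNorm (Pr * ρ * Pr - ρ)
      ≤ ‖(W * Pr * ρ * (1 - Pr)ᴴ).trace‖ + ‖(W * (1 - Pr) * ρ * 1ᴴ).trace‖ := by
        rw [hnorm, hsplit, trace_neg, trace_add]
        exact (Complex.re_le_norm _).trans ((norm_neg _).trans_le (norm_add_le _ _))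
    _ ≤ √((1 - Pr) * ρ * (1 - Pr)ᴴ).trace.re * √(Pr * ρ * Prᴴ).trace.re
          + √(1 * ρ * 1ᴴ).trace.re * √((1 - Pr) * ρ * (1 - Pr)ᴴ).trace.re :=
        add_le_add (hρ.norm_trace_mul_mul_mul_conjTranspose_le hW _ _)
          (hρ.norm_trace_mul_mul_mul_conjTranspose_le hW _ _)
    _ ≤ √ε * 1 + 1 * √ε := by
        have hsqrtQ : √((1 - Pr) * ρ * (1 - Pr)ᴴ).trace.re ≤ √ε :=
          Real.sqrt_le_sqrt (by linarith)
        have hsqrtP : √(Pr * ρ * Prᴴ).trace.re ≤ 1 := by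
          rw [hP.trace_mul_mul_conjTranspose]
          exact Real.sqrt_le_one.mpr (by linarith)
        rw [hρ1, Real.sqrt_one]
        gcongr
    _ = 2 * √ε := by ring

theorem gentle_measurement {n : Type*} [Fintype n] [DecidableEq n]
    (ρ Pr : Matrix n n ℂ) (hρ : ρ.PosSemidef) (hρtr : ρ.trace = 1)
    (hPherm : Pr.IsHermitian) (hPidem : Pr * Pr = Pr)
    (ε : ℝ) (hε0 : 0 ≤ ε) (hε1 : ε ≤ 1)
    (h : 1 - ε ≤ ((Pr * ρ).trace).re) :
    traceNorm (Pr * ρ * Pr - ρ) ≤ 2 * Real.sqrt ε :=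
  gentle_measurement_general ρ Pr hρ hρtr hPherm hPidem ε h
end
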